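/- arXiv:2409.06554 — 4 statements merged into one kernel-verified Lean document; each statement's English description precedes it below -/
import Mathlib

section
/- For a cost matrix C ∈ ℝ^{m×n}, regularization parameter ε > 0, and strictly positive marginals μ ∈ ℝ^m, ν ∈ ℝ^n with ∑_i μ_i = ∑_j ν_j, any minimizer T of the entropy-regularized objective ∑_{ij} C_{ij} T_{ij} + ε ∑_{ij} T_{ij}(log T_{ij} − 1) over matrices T with positive entries satisfying the marginal constraints ∑_j T_{ij} = μ_i and ∑_i T_{ij} = ν_j has the form T_{ij} = a_i · exp(−C_{ij}/ε) · b_j for some positive vectors a ∈ ℝ^m, b ∈ ℝ^n. -/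
open Finset Real

/-- Any minimizer of the entropy-regularized OT objective over positive matrices
with prescribed marginals has the Sinkhorn scaling form. -/
theorem stmt_0 {m n : ℕ} (C : Matrix (Fin m) (Fin n) ℝ) (ε : ℝ) (hε : 0 < ε)
    (μ : Fin m → ℝ) (ν : Fin n → ℝ)
    (hμ : ∀ i, 0 < μ i) (hν : ∀ j, 0 < ν j)
    (hmass : ∑ i, μ i = ∑ j, ν j)
    (T : Matrix (Fin m) (Fin n) ℝ)
    (hTpos : ∀ i j, 0 < T i j)
    (hrow : ∀ i, ∑ j, T i j = μ i)
    (hcol : ∀ j, ∑ i, T i j = ν j)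
    (hmin : ∀ S : Matrix (Fin m) (Fin n) ℝ,
      (∀ i j, 0 < S i j) → (∀ i, ∑ j, S i j = μ i) → (∀ j, ∑ i, S i j = ν j) →
      (∑ i, ∑ j, C i j * T i j) + ε * ∑ i, ∑ j, T i j * (Real.log (T i j) - 1)
        ≤ (∑ i, ∑ j, C i j * S i j) + ε * ∑ i, ∑ j, S i j * (Real.log (S i j) - 1)) :
    ∃ (a : Fin m → ℝ) (b : Fin n → ℝ), (∀ i, 0 < a i) ∧ (∀ j, 0 < b j) ∧
      ∀ i j, T i j = a i * Real.exp (-(C i j) / ε) * b j := by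
  classical
  set F : Fin m → Fin n → ℝ := fun i j => C i j + ε * Real.log (T i j) with hF
  have key : ∀ i1 i2 j1 j2, F i1 j1 + F i2 j2 = F i1 j2 + F i2 j1 := by
    intro i1 i2 j1 j2
    by_cases hii : i1 = i2
    · subst hii; ring
    by_cases hjj : j1 = j2
    · subst hjj; ring
    -- the perturbation pattern
    set w : Fin m → Fin n → ℝ := fun i j =>
      ((if i = i1 then (1:ℝ) else 0) - (if i = i2 then 1 else 0)) *
      ((if j = j1 then (1:ℝ) else 0) - (if j = j2 then 1 else 0)) with hw
    have hwrow : ∀ i, ∑ j, w i j = 0 := by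
      intro i
      simp [hw, ← Finset.mul_sum, Finset.sum_sub_distrib]
    have hwcol : ∀ j, ∑ i, w i j = 0 := by
      intro j
      simp [hw, ← Finset.sum_mul, Finset.sum_sub_distrib]
    have hwabs : ∀ i j, |w i j| ≤ 1 := by
      intro i j
      have : ∀ p q : Prop, ∀ _ : Decidable p, ∀ _ : Decidable q,
          |(if p then (1:ℝ) else 0) - (if q then 1 else 0)| ≤ 1 := by
        intro p q _ _
        split <;> split <;> norm_num
      calc |w i j| = |_| * |_| := abs_mul _ _
        _ ≤ 1 * 1 := mul_le_mul (this _ _ _ _) (this _ _ _ _) (abs_nonneg _) zero_le_one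
        _ = 1 := one_mul 1
    have hwsupp : ∀ i j, w i j ≠ 0 → (i = i1 ∨ i = i2) ∧ (j = j1 ∨ j = j2) := by
      intro i j h
      constructor
      · by_contra hc
        push_neg at hc
        simp [hw, hc.1, hc.2] at h
      · by_contra hc
        push_neg at hc
        simp [hw, hc.1, hc.2] at h
    set δ : ℝ := min (min (T i1 j1) (T i1 j2)) (min (T i2 j1) (T i2 j2)) with hδdef
    have hδ : 0 < δ := by
      simp [hδdef, lt_min_iff]
      exact ⟨⟨hTpos _ _, hTpos _ _⟩, ⟨hTpos _ _, hTpos _ _⟩⟩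
    have hSpos : ∀ t : ℝ, |t| < δ → ∀ i j, 0 < T i j + t * w i j := by
      intro t ht i j
      by_cases hwz : w i j = 0
      · simpa [hwz] using hTpos i j
      · have hδle : δ ≤ T i j := by
          obtain ⟨hi, hj⟩ := hwsupp i j hwz
          rcases hi with rfl | rfl <;> rcases hj with rfl | rfl <;>
            simp [hδdef, min_le_iff, le_refl]
        have : |t * w i j| < T i j := by
          calc |t * w i j| = |t| * |w i j| := abs_mul _ _
            _ ≤ |t| * 1 := by
                exact mul_le_mul_of_nonneg_left (hwabs i j) (abs_nonneg t)
            _ = |t| := mul_one _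
            _ < δ := ht
            _ ≤ T i j := hδle
        have := neg_lt_of_abs_lt this
        linarith
    -- the objective along the perturbation
    set h : ℝ → ℝ := fun t => ∑ i, ∑ j,
      (C i j * (T i j + t * w i j) +
        ε * ((T i j + t * w i j) * (Real.log (T i j + t * w i j) - 1))) with hh
    have hderiv : HasDerivAt h (∑ i, ∑ j, F i j * w i j) 0 := by
      have : HasDerivAt h (∑ i ∈ Finset.univ, ∑ j ∈ Finset.univ,
          (C i j * w i j + ε * (Real.log (T i j) * w i j))) 0 := by
        apply HasDerivAt.fun_sum
        intro i _
        apply HasDerivAt.fun_sum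
        intro j _
        have hlin : HasDerivAt (fun t : ℝ => T i j + t * w i j) (w i j) 0 := by
          simpa using ((hasDerivAt_id (0:ℝ)).mul_const (w i j)).const_add (T i j)
        have hx : (0:ℝ) < T i j + 0 * w i j := by simpa using hTpos i j
        have hψ : HasDerivAt (fun x : ℝ => x * (Real.log x - 1))
            (Real.log (T i j + 0 * w i j)) (T i j + 0 * w i j) := by
          have := (hasDerivAt_id (T i j + 0 * w i j)).fun_mul
            ((Real.hasDerivAt_log hx.ne').sub_const 1)
          refine this.congr_deriv ?_
          simp only [id_eq, zero_mul, add_zero]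
          rw [mul_inv_cancel₀ (hTpos i j).ne']
          ring
        have hcomp := (hψ.comp 0 hlin).const_mul ε
        have hc := (hlin.const_mul (C i j)).fun_add hcomp
        convert hc using 1
        simp
        simp
      convert this using 2 with i
      apply Finset.sum_congr rfl
      intro j _
      simp [hF]; ring
    have hlocmin : IsLocalMin h 0 := by
      have hball : Metric.ball (0:ℝ) δ ∈ nhds (0:ℝ) := Metric.ball_mem_nhds 0 hδ
      filter_upwards [hball] with t ht
      have ht' : |t| < δ := by simpa [Real.dist_eq] using ht
      set S : Matrix (Fin m) (Fin n) ℝ := fun i j => T i j + t * w i j with hS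
      have hS1 : ∀ i j, 0 < S i j := hSpos t ht'
      have hS2 : ∀ i, ∑ j, S i j = μ i := by
        intro i
        simp [hS, Finset.sum_add_distrib, ← Finset.mul_sum, hwrow i, hrow i]
      have hS3 : ∀ j, ∑ i, S i j = ν j := by
        intro j
        simp [hS, Finset.sum_add_distrib, ← Finset.mul_sum, hwcol j, hcol j]
      have hobj := hmin S hS1 hS2 hS3
      have h0eq : h 0 = (∑ i, ∑ j, C i j * T i j) +
          ε * ∑ i, ∑ j, T i j * (Real.log (T i j) - 1) := by
        simp [hh, Finset.sum_add_distrib, Finset.mul_sum]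
      have hteq : h t = (∑ i, ∑ j, C i j * S i j) +
          ε * ∑ i, ∑ j, S i j * (Real.log (S i j) - 1) := by
        simp [hh, hS, Finset.sum_add_distrib, Finset.mul_sum]
      rw [h0eq, hteq]
      exact hobj
    have hzero : (∑ i, ∑ j, F i j * w i j) = 0 :=
      hlocmin.hasDerivAt_eq_zero hderiv
    have hval : (∑ i, ∑ j, F i j * w i j)
        = F i1 j1 - F i1 j2 - (F i2 j1 - F i2 j2) := by
      simp [hw, mul_sub, sub_mul, mul_ite, ite_mul, mul_zero, zero_mul, mul_one, one_mul,
        Finset.sum_sub_distrib, Finset.sum_ite_eq', hii, hjj]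
      ring
    rw [hval] at hzero
    linarith
  -- construct the scalings
  by_cases hm0 : m = 0
  · refine ⟨fun _ => 1, fun _ => 1, fun i => one_pos, fun j => one_pos, fun i j => ?_⟩
    exact absurd i.isLt (by omega)
  by_cases hn0 : n = 0
  · refine ⟨fun _ => 1, fun _ => 1, fun i => one_pos, fun j => one_pos, fun i j => ?_⟩
    exact absurd j.isLt (by omega)
  set i0 : Fin m := ⟨0, Nat.pos_of_ne_zero hm0⟩
  set j0 : Fin n := ⟨0, Nat.pos_of_ne_zero hn0⟩
  refine ⟨fun i => Real.exp (F i j0 / ε), fun j => Real.exp ((F i0 j - F i0 j0) / ε),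
    fun i => Real.exp_pos _, fun j => Real.exp_pos _, fun i j => ?_⟩
  rw [← Real.exp_add, ← Real.exp_add]
  have hk := key i i0 j0 j
  have hεne : ε ≠ 0 := hε.ne'
  have hexp : F i j0 / ε + -C i j / ε + (F i0 j - F i0 j0) / ε = Real.log (T i j) := by
    have : F i j0 + F i0 j - F i0 j0 = F i j := by linarith
    field_simp
    have hFij : F i j = C i j + ε * Real.log (T i j) := rfl
    linarith
  rw [hexp, Real.exp_log (hTpos i j)]
end

section
/- The gravity-model plan solves an entropy-regularized OT problem: given positive outputs O ∈ ℝ^m and expenditures E ∈ ℝ^n and a positive cost matrix C, the matrix T_{ij} = Π_i e^{−C_{ij}/ε} Ω_j with diagonal scalings chosen so that row sums equal μ and column sums equal ν is the unique minimizer of the entropy-regularized transport objective; in particular every matrix of the multiplicative gravity form A_i B_j K_{ij} with K_{ij} = e^{−C_{ij}/ε} and correct marginals is this minimizer. -/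
open Finset Real

lemma gravity_key {t s : ℝ} (ht : 0 < t) (hs : 0 ≤ s) :
    s - t ≤ s * Real.log s - s * Real.log t ∧
      (s ≠ t → s - t < s * Real.log s - s * Real.log t) := by
  rcases eq_or_lt_of_le hs with h0 | hpos
  · refine ⟨by simp [← h0]; linarith, fun _ => by simp [← h0]; linarith⟩
  · have hts : 0 < t / s := div_pos ht hpos
    have hle := Real.log_le_sub_one_of_pos hts
    have hlog : Real.log (t / s) = Real.log t - Real.log s := Real.log_div (ne_of_gt ht) (ne_of_gt hpos)
    have hst : s * (t / s) = t := by field_simp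
    constructor
    · nlinarith [mul_le_mul_of_nonneg_left hle (le_of_lt hpos)]
    · intro hne
      have h1 : t / s ≠ 1 := by
        intro h
        apply hne
        field_simp at h
        linarith
      have hlt := Real.log_lt_sub_one_of_pos hts h1
      nlinarith [mul_lt_mul_of_pos_left hlt hpos]

/-- Wilson's observation: a gravity-type plan T_{ij} = A_i B_j e^{-C_{ij}/ε} with the
correct marginals is the unique minimizer of the entropy-regularized OT objective. -/
theorem stmt_11 {m n : ℕ} (C : Matrix (Fin m) (Fin n) ℝ) (ε : ℝ) (hε : 0 < ε)
    (μ : Fin m → ℝ) (ν : Fin n → ℝ) (hμ : ∀ i, 0 < μ i) (hν : ∀ j, 0 < ν j)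
    (hmass : ∑ i, μ i = ∑ j, ν j)
    (A : Fin m → ℝ) (B : Fin n → ℝ) (hA : ∀ i, 0 < A i) (hB : ∀ j, 0 < B j)
    (T : Matrix (Fin m) (Fin n) ℝ)
    (hT : ∀ i j, T i j = A i * B j * Real.exp (-(C i j) / ε))
    (hrow : ∀ i, ∑ j, T i j = μ i) (hcol : ∀ j, ∑ i, T i j = ν j) :
    ∀ S : Matrix (Fin m) (Fin n) ℝ,
      (∀ i j, 0 ≤ S i j) → (∀ i, ∑ j, S i j = μ i) → (∀ j, ∑ i, S i j = ν j) →
      ((∑ i, ∑ j, C i j * T i j) + ε * ∑ i, ∑ j, T i j * (Real.log (T i j) - 1)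
          ≤ (∑ i, ∑ j, C i j * S i j) + ε * ∑ i, ∑ j, S i j * (Real.log (S i j) - 1))
        ∧ ((∑ i, ∑ j, C i j * S i j) + ε * ∑ i, ∑ j, S i j * (Real.log (S i j) - 1)
            = (∑ i, ∑ j, C i j * T i j) + ε * ∑ i, ∑ j, T i j * (Real.log (T i j) - 1)
          → S = T) := by
  intro S hS hSr hSc
  have hTpos : ∀ i j, 0 < T i j := by
    intro i j; rw [hT]; exact mul_pos (mul_pos (hA i) (hB j)) (Real.exp_pos _)
  have hC : ∀ i j, C i j = ε * (Real.log (A i) + Real.log (B j) - Real.log (T i j)) := by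
    intro i j
    have : Real.log (T i j) = Real.log (A i) + Real.log (B j) + (-(C i j) / ε) := by
      rw [hT, Real.log_mul (ne_of_gt (mul_pos (hA i) (hB j))) (Real.exp_ne_zero _),
        Real.log_mul (ne_of_gt (hA i)) (ne_of_gt (hB j)), Real.log_exp]
    rw [this]; field_simp; ring
  -- master identity
  have master : ∀ X : Matrix (Fin m) (Fin n) ℝ,
      (∀ i, ∑ j, X i j = μ i) → (∀ j, ∑ i, X i j = ν j) →
      (∑ i, ∑ j, C i j * X i j) + ε * ∑ i, ∑ j, X i j * (Real.log (X i j) - 1)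
        = ε * ((∑ i, μ i * Real.log (A i)) + (∑ j, ν j * Real.log (B j)) - ∑ i, μ i)
          + ε * ∑ i, ∑ j, (X i j * Real.log (X i j) - X i j * Real.log (T i j)) := by
    intro X hr hc
    have h1 : ∑ i, ∑ j, C i j * X i j
        = ε * ((∑ i, ∑ j, Real.log (A i) * X i j)
            + (∑ i, ∑ j, Real.log (B j) * X i j)
            - ∑ i, ∑ j, Real.log (T i j) * X i j) := by
      simp_rw [hC]
      rw [← Finset.sum_add_distrib, ← Finset.sum_sub_distrib, Finset.mul_sum]
      congr 1; funext i
      rw [← Finset.sum_add_distrib, ← Finset.sum_sub_distrib, Finset.mul_sum]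
      congr 1; funext j
      ring
    have hA1 : ∑ i, ∑ j, Real.log (A i) * X i j = ∑ i, μ i * Real.log (A i) := by
      congr 1; funext i
      rw [← Finset.mul_sum, hr i, mul_comm]
    have hB1 : ∑ i, ∑ j, Real.log (B j) * X i j = ∑ j, ν j * Real.log (B j) := by
      rw [Finset.sum_comm]
      congr 1; funext j
      rw [← Finset.mul_sum, hc j, mul_comm]
    have hmass1 : ∑ i, ∑ j, X i j = ∑ i, μ i := by
      exact Finset.sum_congr rfl (fun i _ => hr i)
    rw [h1, hA1, hB1]
    have h2 : ∑ i, ∑ j, X i j * (Real.log (X i j) - 1)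
        = (∑ i, ∑ j, X i j * Real.log (X i j)) - ∑ i, ∑ j, X i j := by
      rw [← Finset.sum_sub_distrib]
      congr 1; funext i
      rw [← Finset.sum_sub_distrib]
      congr 1; funext j
      ring
    have h3 : ∑ i, ∑ j, (X i j * Real.log (X i j) - X i j * Real.log (T i j))
        = (∑ i, ∑ j, X i j * Real.log (X i j)) - ∑ i, ∑ j, X i j * Real.log (T i j) := by
      rw [← Finset.sum_sub_distrib]
      congr 1; funext i
      rw [← Finset.sum_sub_distrib]
    have h4 : ∑ i, ∑ j, Real.log (T i j) * X i j = ∑ i, ∑ j, X i j * Real.log (T i j) := by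
      congr 1; funext i; congr 1; funext j; ring
    rw [h2, h3, h4, hmass1]
    ring
  have hMS := master S hSr hSc
  have hMT := master T hrow hcol
  -- the relative-entropy term for T vanishes
  have hDT : ∑ i, ∑ j, (T i j * Real.log (T i j) - T i j * Real.log (T i j)) = 0 := by
    simp
  -- flatten to product sums
  set f : Fin m × Fin n → ℝ := fun p => S p.1 p.2 * Real.log (S p.1 p.2) - S p.1 p.2 * Real.log (T p.1 p.2) with hf
  set g : Fin m × Fin n → ℝ := fun p => S p.1 p.2 - T p.1 p.2 with hg
  have hfsum : ∑ p : Fin m × Fin n, f p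
      = ∑ i, ∑ j, (S i j * Real.log (S i j) - S i j * Real.log (T i j)) := by
    rw [Fintype.sum_prod_type]
  have hgsum : ∑ p : Fin m × Fin n, g p = 0 := by
    rw [Fintype.sum_prod_type]
    have : ∀ i, ∑ j, (S i j - T i j) = 0 := by
      intro i
      rw [Finset.sum_sub_distrib, hSr i, hrow i, sub_self]
    simp [hg, this]
  have hpt : ∀ p : Fin m × Fin n, g p ≤ f p := fun p =>
    (gravity_key (hTpos p.1 p.2) (hS p.1 p.2)).1
  have hDSnn : 0 ≤ ∑ i, ∑ j, (S i j * Real.log (S i j) - S i j * Real.log (T i j)) := by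
    rw [← hfsum, ← hgsum]
    exact Finset.sum_le_sum (fun p _ => hpt p)
  constructor
  · rw [hMS, hMT, hDT]
    nlinarith
  · intro heq
    rw [hMS, hMT, hDT] at heq
    have hDS0 : ∑ i, ∑ j, (S i j * Real.log (S i j) - S i j * Real.log (T i j)) = 0 := by
      have := heq
      field_simp at this
      nlinarith [this]
    by_contra hne
    have : ∃ p : Fin m × Fin n, S p.1 p.2 ≠ T p.1 p.2 := by
      by_contra h
      push_neg at h
      apply hne
      funext i j
      exact h (i, j)
    obtain ⟨p0, hp0⟩ := this
    have hlt : ∑ p : Fin m × Fin n, g p < ∑ p : Fin m × Fin n, f p := by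
      refine Finset.sum_lt_sum (fun p _ => hpt p) ⟨p0, Finset.mem_univ p0, ?_⟩
      exact (gravity_key (hTpos p0.1 p0.2) (hS p0.1 p0.2)).2 hp0
    rw [hgsum, hfsum, hDS0] at hlt
    exact lt_irrefl 0 hlt
end

section
/- In the limit ε → ∞ the entropy-regularized optimal plan converges to the independent coupling: for fixed cost C and positive marginals μ, ν with equal unit mass, the unique minimizer T^ε of ∑ C_{ij}T_{ij} + ε∑ T_{ij}(log T_{ij} − 1) over couplings of (μ, ν) satisfies T^ε_{ij} → μ_i ν_j as ε → ∞. -/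
open Finset Real Filter

/-- Pointwise KL lower bound: `t log(t/p) - t + p ≥ (√t - √p)²`. -/
lemma kl_pointwise (t p : ℝ) (ht : 0 ≤ t) (hp : 0 < p) :
    (Real.sqrt t - Real.sqrt p) ^ 2 ≤ t * Real.log t - t * Real.log p - t + p := by
  rcases eq_or_lt_of_le ht with h | h
  · rw [← h]
    simp [Real.sq_sqrt hp.le, sub_sq, Real.sq_sqrt hp.le]
  · have hst : 0 < Real.sqrt t := Real.sqrt_pos.mpr h
    have hsp : 0 < Real.sqrt p := Real.sqrt_pos.mpr hp
    have hlog : Real.log (Real.sqrt p / Real.sqrt t) ≤ Real.sqrt p / Real.sqrt t - 1 :=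
      Real.log_le_sub_one_of_pos (by positivity)
    have h1 : Real.log t = 2 * Real.log (Real.sqrt t) := by
      rw [Real.log_sqrt ht]; ring
    have h2 : Real.log p = 2 * Real.log (Real.sqrt p) := by
      rw [Real.log_sqrt hp.le]; ring
    have h3 : Real.log (Real.sqrt p / Real.sqrt t)
        = Real.log (Real.sqrt p) - Real.log (Real.sqrt t) := Real.log_div hsp.ne' hst.ne'
    have h4 : 1 - Real.sqrt p / Real.sqrt t ≤ Real.log (Real.sqrt t) - Real.log (Real.sqrt p) := by
      rw [h3] at hlog; linarith
    have h5 : t * (1 - Real.sqrt p / Real.sqrt t)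
        ≤ t * (Real.log (Real.sqrt t) - Real.log (Real.sqrt p)) :=
      mul_le_mul_of_nonneg_left h4 ht
    have hts : Real.sqrt t * Real.sqrt t = t := Real.mul_self_sqrt ht
    have hps : Real.sqrt p * Real.sqrt p = p := Real.mul_self_sqrt hp.le
    have h6 : t * (Real.sqrt p / Real.sqrt t) = Real.sqrt t * Real.sqrt p := by
      field_simp
      nlinarith [hts]
    rw [h1, h2]
    nlinarith [h5, hts, hps, h6]

lemma marg_sum {m n : ℕ} (μ : Fin m → ℝ) (ν : Fin n → ℝ)
    (hμ : ∀ i, 0 < μ i) (hν : ∀ j, 0 < ν j)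
    (S : Matrix (Fin m) (Fin n) ℝ) (hrow : ∀ i, ∑ j, S i j = μ i)
    (hcol : ∀ j, ∑ i, S i j = ν j) :
    ∑ i, ∑ j, S i j * Real.log (μ i * ν j)
      = ∑ i, μ i * Real.log (μ i) + ∑ j, ν j * Real.log (ν j) := by
  have hsplit : ∀ i j, S i j * Real.log (μ i * ν j)
      = S i j * Real.log (μ i) + S i j * Real.log (ν j) := by
    intro i j; rw [Real.log_mul (hμ i).ne' (hν j).ne']; ring
  simp_rw [hsplit, Finset.sum_add_distrib]
  congr 1
  · refine Finset.sum_congr rfl fun i _ => ?_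
    rw [← Finset.sum_mul, hrow]
  · rw [Finset.sum_comm]
    refine Finset.sum_congr rfl fun j _ => ?_
    rw [← Finset.sum_mul, hcol]

/-- As ε → ∞, the entropy-regularized optimal plan converges to the independent
coupling μ ⊗ ν. -/
theorem stmt_13 {m n : ℕ} (C : Matrix (Fin m) (Fin n) ℝ)
    (μ : Fin m → ℝ) (ν : Fin n → ℝ) (hμ : ∀ i, 0 < μ i) (hν : ∀ j, 0 < ν j)
    (hμ1 : ∑ i, μ i = 1) (hν1 : ∑ j, ν j = 1)
    (T : ℝ → Matrix (Fin m) (Fin n) ℝ)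
    (hfeas : ∀ ε > 0, (∀ i j, 0 ≤ T ε i j) ∧ (∀ i, ∑ j, T ε i j = μ i) ∧
      (∀ j, ∑ i, T ε i j = ν j))
    (hmin : ∀ ε > 0, ∀ S : Matrix (Fin m) (Fin n) ℝ,
      (∀ i j, 0 ≤ S i j) → (∀ i, ∑ j, S i j = μ i) → (∀ j, ∑ i, S i j = ν j) →
      (∑ i, ∑ j, C i j * T ε i j) + ε * ∑ i, ∑ j, T ε i j * (Real.log (T ε i j) - 1)
        ≤ (∑ i, ∑ j, C i j * S i j) + ε * ∑ i, ∑ j, S i j * (Real.log (S i j) - 1)) :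
    ∀ i j, Tendsto (fun ε => T ε i j) atTop (nhds (μ i * ν j)) := by
  intro i j
  set P : Matrix (Fin m) (Fin n) ℝ := fun i j => μ i * ν j with hPdef
  have hPpos : ∀ i' j', 0 < P i' j' := fun i' j' => mul_pos (hμ i') (hν j')
  have hProw : ∀ i', ∑ j', P i' j' = μ i' := by
    intro i'; simp only [hPdef, ← Finset.mul_sum, hν1, mul_one]
  have hPcol : ∀ j', ∑ i', P i' j' = ν j' := by
    intro j'; simp only [hPdef, ← Finset.sum_mul, hμ1, one_mul]
  have hμle : ∀ i', μ i' ≤ 1 := by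
    intro i'
    rw [← hμ1]
    exact Finset.single_le_sum (fun k _ => (hμ k).le) (Finset.mem_univ i')
  have hνle : ∀ j', ν j' ≤ 1 := by
    intro j'
    rw [← hν1]
    exact Finset.single_le_sum (fun k _ => (hν k).le) (Finset.mem_univ j')
  have hPle : ∀ i' j', P i' j' ≤ 1 := by
    intro i' j'
    calc P i' j' ≤ 1 * 1 := mul_le_mul (hμle i') (hνle j') (hν j').le zero_le_one
    _ = 1 := one_mul 1
  set B : ℝ := 2 * ∑ i', ∑ j', |C i' j'| with hBdef
  have hB0 : 0 ≤ B := by positivity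
  -- key bound
  have key : ∀ ε : ℝ, 0 < ε → ε * (Real.sqrt (T ε i j) - Real.sqrt (P i j)) ^ 2 ≤ B := by
    intro ε hε
    obtain ⟨hTnn, hTrow, hTcol⟩ := hfeas ε hε
    have hTle : ∀ i' j', T ε i' j' ≤ 1 := by
      intro i' j'
      calc T ε i' j' ≤ ∑ j'', T ε i' j'' :=
            Finset.single_le_sum (fun k _ => hTnn i' k) (Finset.mem_univ j')
      _ = μ i' := hTrow i'
      _ ≤ 1 := hμle i'
    have hm := hmin ε hε P (fun i' j' => (hPpos i' j').le) hProw hPcol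
    -- identities
    have hTid := marg_sum μ ν hμ hν (T ε) hTrow hTcol
    have hPid := marg_sum μ ν hμ hν P hProw hPcol
    have hTm : ∑ i', ∑ j', T ε i' j' = 1 := by
      rw [Finset.sum_congr rfl fun i' _ => hTrow i', hμ1]
    have hPm : ∑ i', ∑ j', P i' j' = 1 := by
      rw [Finset.sum_congr rfl fun i' _ => hProw i', hμ1]
    -- KL sum
    set K : ℝ := ∑ i', ∑ j',
        (T ε i' j' * Real.log (T ε i' j') - T ε i' j' * Real.log (P i' j')
          - T ε i' j' + P i' j') with hKdef
    have hKeq : K = (∑ i', ∑ j', T ε i' j' * (Real.log (T ε i' j') - 1))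
        - ∑ i', ∑ j', P i' j' * (Real.log (P i' j') - 1) := by
      have e1 : ∀ S : Matrix (Fin m) (Fin n) ℝ,
          ∑ i', ∑ j', S i' j' * (Real.log (S i' j') - 1)
            = (∑ i', ∑ j', S i' j' * Real.log (S i' j')) - ∑ i', ∑ j', S i' j' := by
        intro S
        simp only [mul_sub, mul_one, Finset.sum_sub_distrib]
      have e2 : K = (∑ i', ∑ j', T ε i' j' * Real.log (T ε i' j'))
          - (∑ i', ∑ j', T ε i' j' * Real.log (P i' j'))
          - (∑ i', ∑ j', T ε i' j') + ∑ i', ∑ j', P i' j' := by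
        simp only [hKdef, Finset.sum_sub_distrib, Finset.sum_add_distrib]
      rw [e2, e1, e1, hTm, hPm]
      have : ∑ i', ∑ j', T ε i' j' * Real.log (P i' j')
          = ∑ i', ∑ j', P i' j' * Real.log (P i' j') := by
        simp only [hPdef] at hTid hPid ⊢
        rw [hTid, hPid]
      rw [this]
      ring
    have hεK : ε * K ≤ B := by
      rw [hKeq]
      have h1 : ∑ i', ∑ j', C i' j' * P i' j' ≤ ∑ i', ∑ j', |C i' j'| := by
        refine Finset.sum_le_sum fun i' _ => Finset.sum_le_sum fun j' _ => ?_
        calc C i' j' * P i' j' ≤ |C i' j'| * P i' j' :=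
              mul_le_mul_of_nonneg_right (le_abs_self _) (hPpos i' j').le
        _ ≤ |C i' j'| * 1 := mul_le_mul_of_nonneg_left (hPle i' j') (abs_nonneg _)
        _ = |C i' j'| := mul_one _
      have h2 : -(∑ i', ∑ j', |C i' j'|) ≤ ∑ i', ∑ j', C i' j' * T ε i' j' := by
        rw [← Finset.sum_neg_distrib]
        refine Finset.sum_le_sum fun i' _ => ?_
        rw [← Finset.sum_neg_distrib]
        refine Finset.sum_le_sum fun j' _ => ?_
        calc -|C i' j'| ≤ -(|C i' j'| * T ε i' j') := by
              have : |C i' j'| * T ε i' j' ≤ |C i' j'| * 1 :=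
                mul_le_mul_of_nonneg_left (hTle i' j') (abs_nonneg _)
              linarith
        _ ≤ C i' j' * T ε i' j' := by
              have := mul_le_mul_of_nonneg_right (neg_abs_le (C i' j')) (hTnn i' j')
              linarith
      have := hm
      nlinarith [h1, h2]
    -- K is sum of nonneg terms, each ≥ the square
    have hterm : ∀ i' j', (0:ℝ) ≤
        T ε i' j' * Real.log (T ε i' j') - T ε i' j' * Real.log (P i' j')
          - T ε i' j' + P i' j' := by
      intro i' j'
      have := kl_pointwise (T ε i' j') (P i' j') (hTnn i' j') (hPpos i' j')
      nlinarith [sq_nonneg (Real.sqrt (T ε i' j') - Real.sqrt (P i' j'))]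
    have hKge : (Real.sqrt (T ε i j) - Real.sqrt (P i j)) ^ 2 ≤ K := by
      calc (Real.sqrt (T ε i j) - Real.sqrt (P i j)) ^ 2
          ≤ T ε i j * Real.log (T ε i j) - T ε i j * Real.log (P i j)
            - T ε i j + P i j := kl_pointwise _ _ (hTnn i j) (hPpos i j)
      _ ≤ ∑ j', (T ε i j' * Real.log (T ε i j') - T ε i j' * Real.log (P i j')
            - T ε i j' + P i j') :=
          Finset.single_le_sum (fun k _ => hterm i k) (Finset.mem_univ j)
      _ ≤ K :=
          Finset.single_le_sum
            (fun k _ => Finset.sum_nonneg fun l _ => hterm k l) (Finset.mem_univ i)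
    calc ε * (Real.sqrt (T ε i j) - Real.sqrt (P i j)) ^ 2
        ≤ ε * K := mul_le_mul_of_nonneg_left hKge hε.le
    _ ≤ B := hεK
  -- conclude: |T ε i j - P i j| ≤ 2 √(B/ε)
  have hbound : ∀ ε : ℝ, 0 < ε → |T ε i j - P i j| ≤ 2 * Real.sqrt (B / ε) := by
    intro ε hε
    obtain ⟨hTnn, hTrow, hTcol⟩ := hfeas ε hε
    have hTle : T ε i j ≤ 1 := by
      calc T ε i j ≤ ∑ j'', T ε i j'' :=
            Finset.single_le_sum (fun k _ => hTnn i k) (Finset.mem_univ j)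
      _ = μ i := hTrow i
      _ ≤ 1 := hμle i
    have hk := key ε hε
    have hsq : (Real.sqrt (T ε i j) - Real.sqrt (P i j)) ^ 2 ≤ B / ε := by
      rw [le_div_iff₀ hε]
      nlinarith [hk]
    have habs : |Real.sqrt (T ε i j) - Real.sqrt (P i j)| ≤ Real.sqrt (B / ε) := by
      rw [← Real.sqrt_sq_eq_abs]
      exact Real.sqrt_le_sqrt hsq
    have hts : Real.sqrt (T ε i j) * Real.sqrt (T ε i j) = T ε i j :=
      Real.mul_self_sqrt (hTnn i j)
    have hps : Real.sqrt (P i j) * Real.sqrt (P i j) = P i j :=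
      Real.mul_self_sqrt (hPpos i j).le
    have hst1 : Real.sqrt (T ε i j) ≤ 1 := by
      rw [show (1:ℝ) = Real.sqrt 1 by simp]
      exact Real.sqrt_le_sqrt hTle
    have hsp1 : Real.sqrt (P i j) ≤ 1 := by
      rw [show (1:ℝ) = Real.sqrt 1 by simp]
      exact Real.sqrt_le_sqrt (hPle i j)
    have hfact : T ε i j - P i j
        = (Real.sqrt (T ε i j) - Real.sqrt (P i j))
          * (Real.sqrt (T ε i j) + Real.sqrt (P i j)) := by
      nlinarith [hts, hps]
    rw [hfact, abs_mul]
    have hsum : |Real.sqrt (T ε i j) + Real.sqrt (P i j)| ≤ 2 := by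
      rw [abs_of_nonneg (by positivity)]
      linarith
    calc |Real.sqrt (T ε i j) - Real.sqrt (P i j)|
          * |Real.sqrt (T ε i j) + Real.sqrt (P i j)|
        ≤ Real.sqrt (B / ε) * 2 :=
          mul_le_mul habs hsum (abs_nonneg _) (Real.sqrt_nonneg _)
    _ = 2 * Real.sqrt (B / ε) := by ring
  -- the bound tends to 0
  have hlim : Tendsto (fun ε => 2 * Real.sqrt (B / ε)) atTop (nhds 0) := by
    have h1 : Tendsto (fun ε : ℝ => B / ε) atTop (nhds 0) :=
      tendsto_const_nhds.div_atTop tendsto_id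
    have h2 : Tendsto (fun ε : ℝ => Real.sqrt (B / ε)) atTop (nhds 0) := by
      have := (Real.continuous_sqrt.tendsto 0).comp h1
      simpa [Function.comp_def] using this
    have := h2.const_mul 2
    simpa using this
  have : Tendsto (fun ε => T ε i j - P i j) atTop (nhds 0) := by
    refine squeeze_zero_norm' ?_ hlim
    filter_upwards [eventually_gt_atTop 0] with ε hε
    rw [Real.norm_eq_abs]
    exact hbound ε hε
  have := this.add_const (P i j)
  simpa using this
end

section
/- The scaling decomposition T_{ij} = a_i M_{ij} b_j of a positive matrix with prescribed positive marginals is unique up to a single multiplicative constant: if a_i M_{ij} b_j = a'_i M_{ij} b'_j for all i, j, with all of a, b, a', b' strictly positive and M strictly positive, then there exists t > 0 with a'_i = t a_i and b'_j = b_j / t for all i, j. -/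
open Finset

/-- The Sinkhorn scaling decomposition of a positive matrix is unique up to a single
multiplicative constant. -/
theorem stmt_14 {m n : ℕ} (M : Matrix (Fin m) (Fin n) ℝ) (hM : ∀ i j, 0 < M i j)
    (a a' : Fin m → ℝ) (b b' : Fin n → ℝ)
    (ha : ∀ i, 0 < a i) (ha' : ∀ i, 0 < a' i)
    (hb : ∀ j, 0 < b j) (hb' : ∀ j, 0 < b' j)
    (hm : 0 < m) (hn : 0 < n)
    (heq : ∀ i j, a i * M i j * b j = a' i * M i j * b' j) :
    ∃ t : ℝ, 0 < t ∧ (∀ i, a' i = t * a i) ∧ (∀ j, b' j = b j / t) := by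
  have heq' : ∀ i j, a i * b j = a' i * b' j := by
    intro i j
    have h := heq i j
    have hMne := (hM i j).ne'
    field_simp at h
    nlinarith [h, hM i j]
  set i0 : Fin m := ⟨0, hm⟩
  set j0 : Fin n := ⟨0, hn⟩
  refine ⟨a' i0 / a i0, div_pos (ha' i0) (ha i0), ?_, ?_⟩
  · intro i
    have h1 := heq' i j0
    have h2 := heq' i0 j0
    rw [div_mul_eq_mul_div, eq_div_iff (ha i0).ne']
    have key : a' i * a i0 * b' j0 = a' i0 * a i * b' j0 := by
      linear_combination a i * h2 - a i0 * h1
    exact mul_right_cancel₀ (hb' j0).ne' key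
  · intro j
    have h1 := heq' i0 j
    have h2 := heq' i0 j0
    rw [div_div_eq_mul_div, eq_div_iff (ha' i0).ne']
    linear_combination -h1
end
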